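/- Let C ⊆ ℝⁿ be a compact forward invariant set for the system ẋ = f(x), where f : ℝⁿ → ℝⁿ is C². Suppose that for every x ∈ C and every unit vector θ (‖θ‖ = 1) with K_j(x,θ) ≥ 0 for all j ∈ {1,…,m}, the following holds for each i: if K_i(x,θ) = 0, then the total derivative of K_i at (x,θ) applied to the vector (f(x), Df(x)θ) is strictly positive. Then the system is strictly differentially positive on C: there exist T > 0 and ε > 0 such that for every solution x(·) of ẋ = f(x) with x(0) ∈ C, every solution δx(·) of the variational equation d/dt δx(t) = Df(x(t)) δx(t) with δx(0) ∈ K(x(0))\{0}, and every t ≥ T, one has K_i(x(t), δx(t)/‖δx(t)‖) ≥ ε for all i, i.e. δx(t) ∈ K_ε(x(t)). -/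

import Mathlib

/-!
Along a trajectory of the prolonged system `ẋ = f x`, `δẋ = Df(x) δx` the functions
`t ↦ K_i(x t, δx t)` cannot leave `[0, ∞)`: at a time where one of them vanishes while the
others are nonnegative, its derivative is positive by the geometric condition (extended from
unit vectors to all nonzero ones by homogeneity). The same barrier argument makes them strictly
positive at every positive time.

A margin `ε` uniform over the data comes from compactness. If there were none, unit initial
vectors in the cones over `C` would give prolonged trajectories along which some `K_i` at time
`1` tends to `0`. These trajectories stay in a compact set, so by Gronwall a subsequence converges
uniformly on `[0, 2]`, and the limit is again a prolonged trajectory starting in the cones; by the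
barrier argument all `K_i` are positive on it at time `1`, a contradiction. A time shift and the
homogeneity of the `K_i` give the bound for all `t ≥ 1`.
-/

open Set

/-- The cone at `x` determined by the cone-field representation functions `K i`:
`K(x) = {0} ∪ {v ≠ 0 : K_i(x,v) ≥ 0 for all i}`. -/
def coneAt {n m : ℕ} (K : Fin m → EuclideanSpace ℝ (Fin n) → EuclideanSpace ℝ (Fin n) → ℝ)
    (x : EuclideanSpace ℝ (Fin n)) : Set (EuclideanSpace ℝ (Fin n)) :=
  insert 0 {v | v ≠ 0 ∧ ∀ i, 0 ≤ K i x v}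

open Filter Topology Real

theorem ne_zero_and_nonneg_of_mem_coneAt_diff {n m : ℕ}
    {K : Fin m → EuclideanSpace ℝ (Fin n) → EuclideanSpace ℝ (Fin n) → ℝ}
    {x v : EuclideanSpace ℝ (Fin n)} (hv : v ∈ coneAt K x \ {0}) :
    v ≠ 0 ∧ ∀ i, 0 ≤ K i x v := by
  rcases hv with ⟨h | h, h0⟩
  · exact absurd h h0
  · exact h

section Barrier

theorem HasDerivAt.eventually_lt_right {f : ℝ → ℝ} {f' x : ℝ} (hf : HasDerivAt f f' x)
    (hf' : 0 < f') : ∀ᶠ y in 𝓝[>] x, f x < f y := by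
  filter_upwards [(hasDerivAt_iff_tendsto_slope_left_right.1 hf).2.eventually (lt_mem_nhds hf'),
    self_mem_nhdsWithin] with y hslope hxy
  exact (slope_pos_iff hxy).1 hslope

theorem HasDerivAt.eventually_lt_left {f : ℝ → ℝ} {f' x : ℝ} (hf : HasDerivAt f f' x)
    (hf' : 0 < f') : ∀ᶠ y in 𝓝[<] x, f y < f x := by
  filter_upwards [(hasDerivAt_iff_tendsto_slope_left_right.1 hf).1.eventually (lt_mem_nhds hf'),
    self_mem_nhdsWithin] with y hslope hyx
  exact (slope_pos_iff_gt hyx).1 hslope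

variable {ι : Type*} [Finite ι] {g g' : ι → ℝ → ℝ} {a b : ℝ}

theorem nonneg_of_deriv_pos_of_eq_zero (hg : ∀ i, ∀ t ∈ Icc a b, HasDerivAt (g i) (g' i t) t)
    (hg' : ∀ t ∈ Icc a b, (∀ j, 0 ≤ g j t) → ∀ i, g i t = 0 → 0 < g' i t)
    (ha : ∀ j, 0 ≤ g j a) : ∀ t ∈ Icc a b, ∀ j, 0 ≤ g j t := by
  have hclosed : IsClosed ({t | ∀ j, 0 ≤ g j t} ∩ Icc a b) := by
    have hcont : ContinuousOn (fun t j => g j t) (Icc a b) :=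
      continuousOn_pi.2 fun j t ht => (hg j t ht).continuousAt.continuousWithinAt
    have hcone : IsClosed {w : ι → ℝ | ∀ j, 0 ≤ w j} := by
      simpa only [ofPred_forall] using
        isClosed_iInter fun j => isClosed_le continuous_const (continuous_apply j)
    rw [inter_comm]
    exact hcont.preimage_isClosed_of_isClosed isClosed_Icc hcone
  refine fun t ht => hclosed.Icc_subset_of_forall_mem_nhdsWithin ha ?_ ht
  rintro s ⟨hs, hsab⟩
  have hg_s : ∀ j, HasDerivAt (g j) (g' j s) s := fun j => hg j s (Ico_subset_Icc_self hsab)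
  refine eventually_all.2 fun j => ?_
  rcases (hs j).eq_or_lt with hzero | hpos
  · filter_upwards [(hg_s j).eventually_lt_right
      (hg' s (Ico_subset_Icc_self hsab) hs j hzero.symm)] with u hu
    exact hzero.le.trans hu.le
  · filter_upwards [nhdsWithin_le_nhds ((hg_s j).continuousAt.eventually (lt_mem_nhds hpos))]
      with u hu
    exact hu.le

theorem pos_of_deriv_pos_of_eq_zero (hg : ∀ i, ∀ t ∈ Icc a b, HasDerivAt (g i) (g' i t) t)
    (hg' : ∀ t ∈ Icc a b, (∀ j, 0 ≤ g j t) → ∀ i, g i t = 0 → 0 < g' i t)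
    (ha : ∀ j, 0 ≤ g j a) : ∀ t ∈ Ioc a b, ∀ j, 0 < g j t := by
  have hnonneg := nonneg_of_deriv_pos_of_eq_zero hg hg' ha
  intro t ht j
  have htab : t ∈ Icc a b := Ioc_subset_Icc_self ht
  refine (hnonneg t htab j).lt_of_ne fun hzero => ?_
  have hbelow : ∀ᶠ u in 𝓝[<] t, g j u < 0 :=
    hzero ▸ (hg j t htab).eventually_lt_left (hg' t htab (hnonneg t htab) j hzero.symm)
  have habove : ∀ᶠ u in 𝓝[<] t, 0 ≤ g j u := by
    filter_upwards [Ioo_mem_nhdsLT ht.1] with u hu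
    exact hnonneg u ⟨hu.1.le, hu.2.le.trans ht.2⟩ j
  obtain ⟨u, hu, hu'⟩ := (hbelow.and habove).exists
  exact hu.not_ge hu'

end Barrier

theorem fderiv_apply_smul_snd_of_homogeneous {E E' F : Type*} [NormedAddCommGroup E]
    [NormedSpace ℝ E] [NormedAddCommGroup E'] [NormedSpace ℝ E'] [NormedAddCommGroup F]
    [NormedSpace ℝ F] {G : E × E' → F} {ρ : ℝ} (hG : ∀ y w, w ≠ 0 → G (y, ρ • w) = G (y, w))
    {x : E} {v : E'} (hv : v ≠ 0) (hGd : DifferentiableAt ℝ G (x, ρ • v)) (a : E) (b : E') :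
    fderiv ℝ G (x, ρ • v) (a, ρ • b) = fderiv ℝ G (x, v) (a, b) := by
  let S : E × E' →L[ℝ] E × E' :=
    (ContinuousLinearMap.id ℝ E).prodMap (ρ • ContinuousLinearMap.id ℝ E')
  have hGS : G ∘ S =ᶠ[𝓝 (x, v)] G := by
    filter_upwards [(isOpen_compl_singleton.preimage continuous_snd).mem_nhds hv] with p hp
    exact hG p.1 p.2 hp
  rw [← hGS.fderiv_eq, (hGd.hasFDerivAt.comp (x, v) S.hasFDerivAt).fderiv]
  rfl

section Gronwall

variable {E : Type*} [NormedAddCommGroup E] [NormedSpace ℝ E] {v v' : ℝ → E} {M a b : ℝ}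

theorem norm_right_le_mul_exp_of_norm_deriv_le (hv : ∀ t ∈ Icc a b, HasDerivAt v (v' t) t)
    (hbound : ∀ t ∈ Icc a b, ‖v' t‖ ≤ M * ‖v t‖) (hab : a ≤ b) :
    ‖v b‖ ≤ ‖v a‖ * exp (M * (b - a)) := by
  have := norm_le_gronwallBound_of_norm_deriv_right_le (ε := 0)
    (fun t ht => (hv t ht).continuousAt.continuousWithinAt)
    (fun t ht => (hv t (Ico_subset_Icc_self ht)).hasDerivWithinAt) le_rfl
    (fun t ht => (hbound t (Ico_subset_Icc_self ht)).trans_eq (add_zero _).symm) b ⟨hab, le_rfl⟩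
  rwa [gronwallBound_ε0] at this

theorem norm_left_le_mul_exp_of_norm_deriv_le (hv : ∀ t ∈ Icc a b, HasDerivAt v (v' t) t)
    (hbound : ∀ t ∈ Icc a b, ‖v' t‖ ≤ M * ‖v t‖) (hab : a ≤ b) :
    ‖v a‖ ≤ ‖v b‖ * exp (M * (b - a)) := by
  have hmem : ∀ t ∈ Icc a b, a + b - t ∈ Icc a b := fun t ht =>
    ⟨by linarith [ht.2], by linarith [ht.1]⟩
  have := norm_right_le_mul_exp_of_norm_deriv_le (v := fun s => v (a + b - s))
    (fun t ht => (hv _ (hmem t ht)).comp_const_sub (a + b) t)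
    (fun t ht => (norm_neg _).trans_le (hbound _ (hmem t ht))) hab
  simpa using this

theorem ne_zero_of_hasDerivAt_clm_apply {A : ℝ → E →L[ℝ] E} (hA : ContinuousOn A (Icc a b))
    (hv : ∀ t ∈ Icc a b, HasDerivAt v (A t (v t)) t) (ha : v a ≠ 0) (hab : a ≤ b) : v b ≠ 0 := by
  obtain ⟨M, hM⟩ := isCompact_Icc.exists_bound_of_continuousOn hA
  intro hb
  have := norm_left_le_mul_exp_of_norm_deriv_le (M := M) hv
    (fun t ht => (A t).le_of_opNorm_le (hM t ht) _) hab
  rw [hb, norm_zero, zero_mul, norm_le_zero_iff] at this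
  exact ha this

end Gronwall

theorem exists_tendsto_trajectory_of_cauchySeq {E : Type*} [NormedAddCommGroup E]
    [NormedSpace ℝ E] {F : E → E} (hF : LocallyLipschitz F) {Q : Set E} (hQ : IsCompact Q)
    {Y : ℕ → ℝ → E} (hY : ∀ k t, HasDerivAt (Y k) (F (Y k t)) t) {a b : ℝ}
    (hYQ : ∀ k, ∀ t ∈ Icc a b, Y k t ∈ Q) (hY₀ : CauchySeq fun k => Y k a) :
    ∃ Z : ℝ → E, (∀ t ∈ Ioo a b, HasDerivAt Z (F (Z t)) t) ∧
      ∀ t ∈ Icc a b, Tendsto (fun k => Y k t) atTop (𝓝 (Z t)) := by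
  obtain ⟨L, hL⟩ := hF.locallyLipschitzOn.exists_lipschitzOnWith_of_compact hQ
  have hdist : ∀ k l, ∀ t ∈ Icc a b,
      dist (Y k t) (Y l t) ≤ dist (Y k a) (Y l a) * exp (L * (b - a)) := by
    intro k l t ht
    refine (dist_le_of_trajectories_ODE_of_mem (v := fun _ => F) (s := fun _ => Q)
      (fun _ _ => hL) (fun t _ => (hY k t).continuousAt.continuousWithinAt)
      (fun t _ => (hY k t).hasDerivWithinAt) (fun t ht => hYQ k t (Ico_subset_Icc_self ht))
      (fun t _ => (hY l t).continuousAt.continuousWithinAt)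
      (fun t _ => (hY l t).hasDerivWithinAt) (fun t ht => hYQ l t (Ico_subset_Icc_self ht))
      le_rfl t ht).trans ?_
    gcongr
    exact ht.2
  have hcauchy : UniformCauchySeqOn Y atTop (Icc a b) := by
    refine Metric.uniformCauchySeqOn_iff.2 fun ε hε => ?_
    obtain ⟨N, hN⟩ := Metric.cauchySeq_iff.1 hY₀ (ε / exp (L * (b - a))) (by positivity)
    refine ⟨N, fun k hk l hl t ht => (hdist k l t ht).trans_lt ?_⟩
    rw [← lt_div_iff₀ (exp_pos _)]
    exact hN k hk l hl
  have hlim : ∀ t ∈ Icc a b, ∃ z, Tendsto (fun k => Y k t) atTop (𝓝 z) := fun t ht =>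
    let ⟨z, _, hz⟩ := cauchySeq_tendsto_of_isComplete hQ.isComplete (fun k => hYQ k t ht)
      (hcauchy.cauchySeq ht)
    ⟨z, hz⟩
  set Z : ℝ → E := fun t => limUnder atTop fun k => Y k t
  have hZ : ∀ t ∈ Icc a b, Tendsto (fun k => Y k t) atTop (𝓝 (Z t)) :=
    fun t ht => tendsto_nhds_limUnder (hlim t ht)
  have hZQ : ∀ t ∈ Icc a b, Z t ∈ Q := fun t ht =>
    hQ.isClosed.mem_of_tendsto (hZ t ht) (Eventually.of_forall fun k => hYQ k t ht)
  have hFY : TendstoUniformlyOn (fun k t => F (Y k t)) (fun t => F (Z t)) atTop (Ioo a b) :=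
    UniformContinuousOn.comp_tendstoUniformlyOn_eventually
      (Eventually.of_forall fun k t ht => hYQ k t (Ioo_subset_Icc_self ht))
      (fun t ht => hZQ t (Ioo_subset_Icc_self ht))
      (hQ.uniformContinuousOn_of_continuous hF.continuous.continuousOn)
      ((hcauchy.tendstoUniformlyOn_of_tendsto hZ).mono Ioo_subset_Icc_self)
  exact ⟨Z, fun t ht => hasDerivAt_of_tendstoUniformlyOn isOpen_Ioo hFY
    (Eventually.of_forall fun k t _ => hY k t) (fun t ht => hZ t (Ioo_subset_Icc_self ht)) ht, hZ⟩

section ConeField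

variable {E : Type*} [NormedAddCommGroup E] [NormedSpace ℝ E] {ι : Type*}
  {K : ι → E → E → ℝ} {f : E → E} {C : Set E}

noncomputable def prolongedField (f : E → E) (p : E × E) : E × E := (f p.1, fderiv ℝ f p.1 p.2)

theorem contDiff_prolongedField {n : WithTop ℕ∞} (hf : ContDiff ℝ (n + 1) f) :
    ContDiff ℝ n (prolongedField f) :=
  ((hf.of_le le_self_add).comp contDiff_fst).prodMk
    (((hf.fderiv_right le_rfl).comp contDiff_fst).clm_apply contDiff_snd)

def ProlongedFieldPointsInward (K : ι → E → E → ℝ) (f : E → E) (C : Set E) : Prop :=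
  ∀ x ∈ C, ∀ v ≠ 0, (∀ j, 0 ≤ K j x v) → ∀ i, K i x v = 0 →
    0 < fderiv ℝ (fun p : E × E => K i p.1 p.2) (x, v) (prolongedField f (x, v))

theorem prolongedFieldPointsInward_of_norm_eq_one
    (hKd : ∀ i, ∀ x v : E, v ≠ 0 → DifferentiableAt ℝ (fun p : E × E => K i p.1 p.2) (x, v))
    (hKhom : ∀ i, ∀ x v : E, v ≠ 0 → ∀ ρ : ℝ, 0 < ρ → K i x (ρ • v) = K i x v)
    (hgeom : ∀ x ∈ C, ∀ θ : E, ‖θ‖ = 1 → (∀ j, 0 ≤ K j x θ) → ∀ i, K i x θ = 0 →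
      0 < fderiv ℝ (fun p : E × E => K i p.1 p.2) (x, θ) (f x, fderiv ℝ f x θ)) :
    ProlongedFieldPointsInward K f C := by
  intro x hx v hv hK i hi
  have hρ : 0 < ‖v‖ := norm_pos_iff.2 hv
  set θ := ‖v‖⁻¹ • v
  have hvθ : ‖v‖ • θ = v := smul_inv_smul₀ hρ.ne' v
  have hθ0 : θ ≠ 0 := smul_ne_zero (inv_ne_zero hρ.ne') hv
  have hKθ : ∀ j, K j x θ = K j x v := fun j => hKhom j x v hv _ (inv_pos.2 hρ)
  have hθ := hgeom x hx θ (norm_smul_inv_norm hv) (fun j => (hKθ j).symm ▸ hK j) i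
    ((hKθ i).trans hi)
  rw [← fderiv_apply_smul_snd_of_homogeneous (fun y w hw => hKhom i y w hw _ hρ)
    hθ0 (hvθ.symm ▸ hKd i x v hv),
    ← ContinuousLinearMap.map_smul, hvθ] at hθ
  exact hθ

theorem norm_variational_le_and_one_le {M T t : ℝ} (hM : ∀ y ∈ C, ‖fderiv ℝ f y‖ ≤ M)
    (hM0 : 0 ≤ M) {x v : ℝ → E} (hxC : ∀ s, 0 ≤ s → x s ∈ C)
    (hv : ∀ s, HasDerivAt v (fderiv ℝ f (x s) (v s)) s) (hv0 : ‖v 0‖ = 1) (ht : t ∈ Icc 0 T) :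
    ‖v t‖ ≤ exp (M * T) ∧ 1 ≤ ‖v t‖ * exp (M * T) := by
  have hderiv : ∀ s ∈ Icc 0 t, ‖fderiv ℝ f (x s) (v s)‖ ≤ M * ‖v s‖ := fun s hs =>
    (fderiv ℝ f (x s)).le_of_opNorm_le (hM _ (hxC s hs.1)) _
  have hexp : exp (M * (t - 0)) ≤ exp (M * T) := by gcongr; linarith [ht.2]
  have hup := norm_right_le_mul_exp_of_norm_deriv_le (fun s _ => hv s) hderiv ht.1
  have hlow := norm_left_le_mul_exp_of_norm_deriv_le (fun s _ => hv s) hderiv ht.1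
  rw [hv0] at hup hlow
  exact ⟨by linarith, hlow.trans (by gcongr)⟩

theorem hasDerivAt_comp_prolonged
    (hKd : ∀ i, ∀ x v : E, v ≠ 0 → DifferentiableAt ℝ (fun p : E × E => K i p.1 p.2) (x, v))
    {Y : ℝ → E × E} {t : ℝ} (hY : HasDerivAt Y (prolongedField f (Y t)) t) (hYt : (Y t).2 ≠ 0)
    (i : ι) : HasDerivAt (fun s => K i (Y s).1 (Y s).2)
      (fderiv ℝ (fun p : E × E => K i p.1 p.2) (Y t) (prolongedField f (Y t))) t :=
  HasFDerivAt.comp_hasDerivAt (l := fun p : E × E => K i p.1 p.2) t (hKd i _ _ hYt).hasFDerivAt hY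

variable [Finite ι] {Y : ℝ → E × E} {a b : ℝ}

theorem cone_nonneg_of_prolonged
    (hKd : ∀ i, ∀ x v : E, v ≠ 0 → DifferentiableAt ℝ (fun p : E × E => K i p.1 p.2) (x, v))
    (hin : ProlongedFieldPointsInward K f C)
    (hY : ∀ t ∈ Icc a b, HasDerivAt Y (prolongedField f (Y t)) t)
    (hYC : ∀ t ∈ Icc a b, (Y t).1 ∈ C) (hYne : ∀ t ∈ Icc a b, (Y t).2 ≠ 0)
    (ha : ∀ j, 0 ≤ K j (Y a).1 (Y a).2) : ∀ t ∈ Icc a b, ∀ j, 0 ≤ K j (Y t).1 (Y t).2 :=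
  nonneg_of_deriv_pos_of_eq_zero
    (fun i t ht => hasDerivAt_comp_prolonged hKd (hY t ht) (hYne t ht) i)
    (fun t ht => hin _ (hYC t ht) _ (hYne t ht)) ha

theorem cone_pos_of_prolonged
    (hKd : ∀ i, ∀ x v : E, v ≠ 0 → DifferentiableAt ℝ (fun p : E × E => K i p.1 p.2) (x, v))
    (hin : ProlongedFieldPointsInward K f C)
    (hY : ∀ t ∈ Icc a b, HasDerivAt Y (prolongedField f (Y t)) t)
    (hYC : ∀ t ∈ Icc a b, (Y t).1 ∈ C) (hYne : ∀ t ∈ Icc a b, (Y t).2 ≠ 0)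
    (ha : ∀ j, 0 ≤ K j (Y a).1 (Y a).2) : ∀ t ∈ Ioc a b, ∀ j, 0 < K j (Y t).1 (Y t).2 :=
  pos_of_deriv_pos_of_eq_zero
    (fun i t ht => hasDerivAt_comp_prolonged hKd (hY t ht) (hYne t ht) i)
    (fun t ht => hin _ (hYC t ht) _ (hYne t ht)) ha

end ConeField

section Margin

variable {E : Type*} [NormedAddCommGroup E] [NormedSpace ℝ E] {ι : Type*} [Finite ι]
  {K : ι → E → E → ℝ} {f : E → E} {C : Set E}

theorem cone_pos_at_one_of_tendsto
    (hKd : ∀ i, ∀ x v : E, v ≠ 0 → DifferentiableAt ℝ (fun p : E × E => K i p.1 p.2) (x, v))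
    (hin : ProlongedFieldPointsInward K f C) {Y : ℕ → ℝ → E × E} {Z : ℝ → E × E}
    (hY : ∀ k t, HasDerivAt (Y k) (prolongedField f (Y k t)) t)
    (hYC : ∀ k, ∀ t ∈ Icc (0 : ℝ) 2, (Y k t).1 ∈ C)
    (hYne : ∀ k, ∀ t ∈ Icc (0 : ℝ) 2, (Y k t).2 ≠ 0)
    (hY0 : ∀ k j, 0 ≤ K j (Y k 0).1 (Y k 0).2)
    (hZ : ∀ t ∈ Ioo (0 : ℝ) 2, HasDerivAt Z (prolongedField f (Z t)) t)
    (hZC : ∀ t ∈ Icc (0 : ℝ) 2, (Z t).1 ∈ C) (hZne : ∀ t ∈ Icc (0 : ℝ) 2, (Z t).2 ≠ 0)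
    (hYZ : ∀ t ∈ Icc (0 : ℝ) 2, Tendsto (fun k => Y k t) atTop (𝓝 (Z t))) (j : ι) :
    0 < K j (Z 1).1 (Z 1).2 := by
  have hhalf : (1 / 2 : ℝ) ∈ Icc (0 : ℝ) 2 := ⟨by norm_num, by norm_num⟩
  have hYhalf : ∀ k j, 0 ≤ K j (Y k (1 / 2)).1 (Y k (1 / 2)).2 := fun k j =>
    cone_nonneg_of_prolonged hKd hin (fun t _ => hY k t)
      (fun t ht => hYC k t ⟨ht.1, ht.2.trans (by norm_num)⟩)
      (fun t ht => hYne k t ⟨ht.1, ht.2.trans (by norm_num)⟩) (hY0 k) _ ⟨by norm_num, le_rfl⟩ j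
  -- the limit curve `Z` is only known to be a trajectory on `(0, 2)`, so we restart it at `1 / 2`
  have hZhalf : ∀ j, 0 ≤ K j (Z (1 / 2)).1 (Z (1 / 2)).2 := fun j =>
    ge_of_tendsto ((hKd j _ _ (hZne _ hhalf)).continuousAt.tendsto.comp (hYZ _ hhalf))
      (Eventually.of_forall fun k => hYhalf k j)
  have hsub : Icc (1 / 2 : ℝ) 1 ⊆ Ioo 0 2 := Icc_subset_Ioo (by norm_num) (by norm_num)
  exact cone_pos_of_prolonged hKd hin (fun t ht => hZ t (hsub ht))
    (fun t ht => hZC t (Ioo_subset_Icc_self (hsub ht)))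
    (fun t ht => hZne t (Ioo_subset_Icc_self (hsub ht))) hZhalf 1 ⟨by norm_num, le_rfl⟩ j

theorem exists_margin_of_norm_eq_one [FiniteDimensional ℝ E] (hf : ContDiff ℝ 2 f)
    (hC : IsCompact C)
    (hCinv : ∀ x : ℝ → E, (∀ t, HasDerivAt x (f (x t)) t) → x 0 ∈ C → ∀ t, 0 ≤ t → x t ∈ C)
    (hKd : ∀ i, ∀ x v : E, v ≠ 0 → DifferentiableAt ℝ (fun p : E × E => K i p.1 p.2) (x, v))
    (hin : ProlongedFieldPointsInward K f C) :
    ∃ ε > 0, ∀ x v : ℝ → E, (∀ t, HasDerivAt x (f (x t)) t) → x 0 ∈ C →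
      (∀ t, HasDerivAt v (fderiv ℝ f (x t) (v t)) t) → ‖v 0‖ = 1 →
      (∀ j, 0 ≤ K j (x 0) (v 0)) → ∀ i, ε ≤ K i (x 1) (v 1) := by
  obtain ⟨M, hM0, hM⟩ : ∃ M, 0 ≤ M ∧ ∀ y ∈ C, ‖fderiv ℝ f y‖ ≤ M := by
    obtain ⟨M, hM⟩ :=
      hC.exists_bound_of_continuousOn (hf.continuous_fderiv two_ne_zero).continuousOn
    exact ⟨max M 0, le_max_right _ _, fun y hy => (hM y hy).trans (le_max_left _ _)⟩
  by_contra! hcon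
  choose X V hX hXC hV hV0 hVK i hi using fun k : ℕ => hcon (1 / (k + 1)) (by positivity)
  have hXC' : ∀ k t, 0 ≤ t → X k t ∈ C := fun k => hCinv _ (hX k) (hXC k)
  have hVbound : ∀ k, ∀ t ∈ Icc (0 : ℝ) 2, ‖V k t‖ ≤ exp (M * 2) ∧ 1 ≤ ‖V k t‖ * exp (M * 2) :=
    fun k t ht => norm_variational_le_and_one_le hM hM0 (hXC' k) (hV k) (hV0 k) ht
  have hVne : ∀ k, ∀ t ∈ Icc (0 : ℝ) 2, V k t ≠ 0 := fun k t ht hzero => by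
    have hlow := (hVbound k t ht).2
    norm_num [hzero] at hlow
  set Q := C ×ˢ Metric.closedBall (0 : E) (exp (M * 2))
  have hQ : IsCompact Q := hC.prod (isCompact_closedBall _ _)
  have hYQ : ∀ k, ∀ t ∈ Icc (0 : ℝ) 2, (X k t, V k t) ∈ Q := fun k t ht =>
    ⟨hXC' k t ht.1, mem_closedBall_zero_iff.2 (hVbound k t ht).1⟩
  obtain ⟨p, -, φ, hφ, hlim0⟩ := hQ.tendsto_subseq fun k => hYQ k 0 ⟨le_rfl, zero_le_two⟩
  obtain ⟨Z, hZ, hYZ⟩ := exists_tendsto_trajectory_of_cauchySeq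
    (contDiff_prolongedField (n := 1) hf).locallyLipschitz hQ
    (fun k t => (hX (φ k) t).prodMk (hV (φ k) t)) (fun k => hYQ (φ k)) hlim0.cauchySeq
  have hZQ : ∀ t ∈ Icc (0 : ℝ) 2, Z t ∈ Q := fun t ht =>
    hQ.isClosed.mem_of_tendsto (hYZ t ht) (Eventually.of_forall fun k => hYQ (φ k) t ht)
  have hZne : ∀ t ∈ Icc (0 : ℝ) 2, (Z t).2 ≠ 0 := fun t ht hzero => by
    have hlow : 1 ≤ ‖(Z t).2‖ * exp (M * 2) := ge_of_tendsto
      ((((continuous_norm.comp continuous_snd).tendsto _).comp (hYZ t ht)).mul_const _)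
      (Eventually.of_forall fun k => (hVbound (φ k) t ht).2)
    norm_num [hzero] at hlow
  have hZ1 : ∀ j, 0 < K j (Z 1).1 (Z 1).2 := cone_pos_at_one_of_tendsto hKd hin
    (fun k t => (hX (φ k) t).prodMk (hV (φ k) t)) (fun k t ht => hXC' (φ k) t ht.1)
    (fun k t ht => hVne (φ k) t ht) (fun k => hVK (φ k)) hZ (fun t ht => (hZQ t ht).1) hZne hYZ
  have hone : (1 : ℝ) ∈ Icc (0 : ℝ) 2 := ⟨zero_le_one, one_le_two⟩
  have hεk : Tendsto (fun k => 1 / ((φ k : ℝ) + 1)) atTop (𝓝 0) :=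
    tendsto_one_div_add_atTop_nhds_zero_nat.comp hφ.tendsto_atTop
  have hev : ∀ᶠ k in atTop, ∀ j, 1 / ((φ k : ℝ) + 1) < K j (X (φ k) 1) (V (φ k) 1) :=
    eventually_all.2 fun j => (hεk.eventually (gt_mem_nhds (half_pos (hZ1 j)))).and
      ((((hKd j _ _ (hZne 1 hone)).continuousAt.tendsto.comp (hYZ 1 hone))).eventually
        (lt_mem_nhds (half_lt_self (hZ1 j)))) |>.mono fun k hk => hk.1.trans hk.2
  obtain ⟨k, hk⟩ := hev.exists
  exact (hk (i (φ k))).not_ge (hi (φ k)).le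

end Margin

theorem strict_differential_positivity_compact_general {n m : ℕ}
    (f : EuclideanSpace ℝ (Fin n) → EuclideanSpace ℝ (Fin n))
    (hf : ContDiff ℝ 2 f)
    (C : Set (EuclideanSpace ℝ (Fin n)))
    (hCcompact : IsCompact C)
    (hC : ∀ x : ℝ → EuclideanSpace ℝ (Fin n),
      (∀ t, HasDerivAt x (f (x t)) t) → x 0 ∈ C → ∀ t, 0 ≤ t → x t ∈ C)
    (K : Fin m → EuclideanSpace ℝ (Fin n) → EuclideanSpace ℝ (Fin n) → ℝ)
    (hKsmooth : ∀ i, ∀ x v : EuclideanSpace ℝ (Fin n), v ≠ 0 →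
      DifferentiableAt ℝ
        (fun p : EuclideanSpace ℝ (Fin n) × EuclideanSpace ℝ (Fin n) => K i p.1 p.2) (x, v))
    (hKhom : ∀ i, ∀ x v : EuclideanSpace ℝ (Fin n), v ≠ 0 → ∀ ρ : ℝ, 0 < ρ →
      K i x (ρ • v) = K i x v)
    (hgeom : ∀ x ∈ C, ∀ θ : EuclideanSpace ℝ (Fin n), ‖θ‖ = 1 → (∀ j, 0 ≤ K j x θ) →
      ∀ i, K i x θ = 0 →
      0 < fderiv ℝ
        (fun p : EuclideanSpace ℝ (Fin n) × EuclideanSpace ℝ (Fin n) => K i p.1 p.2)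
        (x, θ) (f x, fderiv ℝ f x θ)) :
    ∃ T > (0:ℝ), ∃ ε > (0:ℝ),
      ∀ x : ℝ → EuclideanSpace ℝ (Fin n),
        (∀ t, HasDerivAt x (f (x t)) t) → x 0 ∈ C →
      ∀ δx : ℝ → EuclideanSpace ℝ (Fin n),
        (∀ t, HasDerivAt δx (fderiv ℝ f (x t) (δx t)) t) →
        δx 0 ∈ coneAt K (x 0) \ {0} →
      ∀ t, T ≤ t → ∀ i, ε ≤ K i (x t) (‖δx t‖⁻¹ • δx t) := by
  have hin := prolongedFieldPointsInward_of_norm_eq_one hKsmooth hKhom hgeom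
  obtain ⟨ε, hε, hmargin⟩ := exists_margin_of_norm_eq_one hf hCcompact hC hKsmooth hin
  refine ⟨1, one_pos, ε, hε, fun x hx hx0 δx hδx hδx0 t ht i => ?_⟩
  obtain ⟨hδ0, hK0⟩ := ne_zero_and_nonneg_of_mem_coneAt_diff hδx0
  have hne : ∀ s, 0 ≤ s → δx s ≠ 0 := fun s hs => ne_zero_of_hasDerivAt_clm_apply
    ((hf.continuous_fderiv two_ne_zero).comp
      (continuous_iff_continuousAt.2 fun s => (hx s).continuousAt)).continuousOn
    (fun s _ => hδx s) hδ0 hs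
  set c := t - 1
  have hc : 0 ≤ c := sub_nonneg.2 ht
  have hKc : ∀ j, 0 ≤ K j (x c) (δx c) :=
    cone_nonneg_of_prolonged (Y := fun s => (x s, δx s)) hKsmooth hin
      (fun s _ => (hx s).prodMk (hδx s)) (fun s hs => hC x hx hx0 s hs.1)
      (fun s hs => hne s hs.1) hK0 c ⟨hc, le_rfl⟩
  have hρ : ∀ s, 0 ≤ s → 0 < ‖δx s‖⁻¹ := fun s hs => inv_pos.2 (norm_pos_iff.2 (hne s hs))
  have key := hmargin (fun s => x (s + c)) (fun s => ‖δx c‖⁻¹ • δx (s + c))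
    (fun s => (hx (s + c)).comp_add_const s c) (by simpa using hC x hx hx0 c hc)
    (fun s => by rw [map_smul]; exact ((hδx (s + c)).comp_add_const s c).const_smul ‖δx c‖⁻¹)
    (by simpa using norm_smul_inv_norm (𝕜 := ℝ) (hne c hc))
    (fun j => by simpa [hKhom j _ _ (hne c hc) _ (hρ c hc)] using hKc j) i
  have htc : 1 + c = t := by ring
  have ht0 : 0 ≤ t := by linarith
  rwa [htc, hKhom i _ _ (hne t ht0) _ (hρ c hc), ← hKhom i _ _ (hne t ht0) _ (hρ t ht0)] at key

/-- **Theorem 3 (strict differential positivity on compact sets from strict pointwise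
geometric conditions).** Let `C` be a compact forward invariant set. If for every `x ∈ C`
and every unit vector `θ` in the cone `K(x)` with an active constraint `K_i(x,θ) = 0`, the
derivative of `K_i` along the prolonged vector field `(f(x), Df(x)θ)` is strictly positive,
then the system is strictly differentially positive on `C`: there exist `T > 0` and `ε > 0`
such that every solution of the variational equation starting in `K(x(0)) \ {0}` satisfies
`δx(t)/‖δx(t)‖ ∈ K_ε(x(t))` for all `t ≥ T`. -/
theorem strict_differential_positivity_compact {n m : ℕ}
    (f : EuclideanSpace ℝ (Fin n) → EuclideanSpace ℝ (Fin n))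
    (hf : ContDiff ℝ 2 f)
    (C : Set (EuclideanSpace ℝ (Fin n)))
    (hCcompact : IsCompact C)
    (hC : ∀ x : ℝ → EuclideanSpace ℝ (Fin n),
      (∀ t, HasDerivAt x (f (x t)) t) → x 0 ∈ C → ∀ t, 0 ≤ t → x t ∈ C)
    (K : Fin m → EuclideanSpace ℝ (Fin n) → EuclideanSpace ℝ (Fin n) → ℝ)
    (hKsmooth : ∀ i, ∀ x v : EuclideanSpace ℝ (Fin n), v ≠ 0 →
      DifferentiableAt ℝ
        (fun p : EuclideanSpace ℝ (Fin n) × EuclideanSpace ℝ (Fin n) => K i p.1 p.2) (x, v))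
    (hKhom : ∀ i, ∀ x v : EuclideanSpace ℝ (Fin n), v ≠ 0 → ∀ ρ : ℝ, 0 < ρ →
      K i x (ρ • v) = K i x v)
    (hKclosed : ∀ x, IsClosed (coneAt K x))
    (hKconvex : ∀ x, Convex ℝ (coneAt K x))
    (hKpointed : ∀ x, coneAt K x ∩ (-coneAt K x) = {0})
    (hKsolid : ∀ x, (interior (coneAt K x)).Nonempty)
    (hgeom : ∀ x ∈ C, ∀ θ : EuclideanSpace ℝ (Fin n), ‖θ‖ = 1 → (∀ j, 0 ≤ K j x θ) →
      ∀ i, K i x θ = 0 →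
      0 < fderiv ℝ
        (fun p : EuclideanSpace ℝ (Fin n) × EuclideanSpace ℝ (Fin n) => K i p.1 p.2)
        (x, θ) (f x, fderiv ℝ f x θ)) :
    ∃ T > (0:ℝ), ∃ ε > (0:ℝ),
      ∀ x : ℝ → EuclideanSpace ℝ (Fin n),
        (∀ t, HasDerivAt x (f (x t)) t) → x 0 ∈ C →
      ∀ δx : ℝ → EuclideanSpace ℝ (Fin n),
        (∀ t, HasDerivAt δx (fderiv ℝ f (x t) (δx t)) t) →
        δx 0 ∈ coneAt K (x 0) \ {0} →
      ∀ t, T ≤ t → ∀ i, ε ≤ K i (x t) (‖δx t‖⁻¹ • δx t) :=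
  strict_differential_positivity_compact_general f hf C hCcompact hC K hKsmooth hKhom hgeom
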